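/- arXiv:2310.15900 — 2 statements merged into one kernel-verified Lean document; each statement's English description precedes it below -/
import Mathlib

section
/- Let n be a friend of 10 and let k = ω(n). Then v_5(n) ≤ (k − 1)² + 1. -/
/-!
Since `σ(10)/10 = 9/5`, a friend `n` of `10` satisfies `5 σ(n) = 9 n`. Hence `5 ∣ n`, `n` is odd
(a proper multiple of `10` has a larger abundancy index) and `v₅(n) = 1 + ∑ₚ v₅(σ(p^aₚ))`.
The term for `p = 5` vanishes. For `p ≠ 5`, the factor `σ(p^a) = 1 + p + ⋯ + p^a` divides the
odd number `σ(n)`, so `a + 1` is odd; if moreover `5 ∣ σ(p^a)`, then `p ≡ 1 (mod 5)`, and lifting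
the exponent gives `v₅(σ(p^a)) = v₅(a + 1) =: r`. For each `1 ≤ s ≤ r` there is a prime `q`
modulo which `p` has order exactly `5^s`; these primes are distinct, `≡ 1 (mod 5)`, and divide
`σ(p^a) ∣ σ(n) ∣ 9 n`, so they are prime factors of `n` other than `5`. Thus each of the `k - 1`
terms is at most `k - 1`.
-/

open ArithmeticFunction

/-- The abundancy index `σ(n)/n` as a rational number. -/
noncomputable def abundancy (n : ℕ) : ℚ := (ArithmeticFunction.sigma 1 n : ℚ) / n

/-- `m` is a friend of `n` if they are distinct positive integers with the same
abundancy index. -/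
def IsFriend (m n : ℕ) : Prop := 0 < m ∧ 0 < n ∧ m ≠ n ∧ abundancy m = abundancy n

open scoped ArithmeticFunction.sigma
open Finset

instance Nat.fact_prime_five : Fact (Nat.Prime 5) := ⟨Nat.prime_five⟩

namespace Nat

variable {ℓ p m : ℕ}

theorem geom_sum_modEq_of_modEq_one (h : p ≡ 1 [MOD ℓ]) (m : ℕ) :
    ∑ i ∈ range m, p ^ i ≡ m [MOD ℓ] := by
  rw [← ZMod.natCast_eq_natCast_iff] at h ⊢
  push_cast
  simp [h]

theorem not_dvd_geom_sum_self (hℓ : ℓ ≠ 1) (hm : m ≠ 0) : ¬ ℓ ∣ ∑ i ∈ range m, ℓ ^ i := by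
  obtain ⟨m, rfl⟩ := exists_eq_succ_of_ne_zero hm
  rw [sum_range_succ', pow_zero,
    Nat.dvd_add_right (dvd_sum fun i _ => dvd_pow_self ℓ i.succ_ne_zero)]
  exact fun h => hℓ (Nat.dvd_one.mp h)

theorem lt_geom_sum (hp : 1 < p) (hm : 1 < m) : m < ∑ i ∈ range m, p ^ i :=
  calc m = ∑ _i ∈ range m, 1 := by simp
    _ < ∑ i ∈ range m, p ^ i :=
      sum_lt_sum (fun i _ => one_le_pow _ _ (by omega)) ⟨1, mem_range.mpr hm, by simpa using hp⟩

theorem dvd_geom_sum_of_orderOf_dvd {q : ℕ} [Fact q.Prime] (h1 : orderOf (p : ZMod q) ≠ 1)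
    (hm : orderOf (p : ZMod q) ∣ m) : q ∣ ∑ i ∈ range m, p ^ i := by
  have hpow : (p : ZMod q) ^ m = 1 := orderOf_dvd_iff_pow_eq_one.mp hm
  have hne : (p : ZMod q) - 1 ≠ 0 := sub_ne_zero.mpr fun h => h1 (orderOf_eq_one_iff.mpr h)
  have hmul := geom_sum_mul (p : ZMod q) m
  rw [hpow, sub_self] at hmul
  rw [← ZMod.natCast_eq_zero_iff]
  push_cast
  exact eq_zero_of_ne_zero_of_mul_right_eq_zero hne hmul

theorem modEq_one_of_orderOf_eq {q d : ℕ} [Fact q.Prime] (h : orderOf (p : ZMod q) = d)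
    (hd : d ≠ 0) : q ≡ 1 [MOD d] := by
  have hp : (p : ZMod q) ≠ 0 := fun hp => hd (by simpa [hp] using h.symm)
  exact ((modEq_iff_dvd' (Fact.out : q.Prime).one_le).mpr
    (h ▸ ZMod.orderOf_dvd_card_sub_one hp)).symm

theorem modEq_one_of_dvd_geom_sum [Fact ℓ.Prime] (hp : ¬ ℓ ∣ p) (hm : m.Coprime (ℓ - 1))
    (h : ℓ ∣ ∑ i ∈ range m, p ^ i) : p ≡ 1 [MOD ℓ] := by
  have hp0 : (p : ZMod ℓ) ≠ 0 := by rwa [Ne, ZMod.natCast_eq_zero_iff]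
  have hsum : ∑ i ∈ range m, (p : ZMod ℓ) ^ i = 0 := by
    rw [← ZMod.natCast_eq_zero_iff] at h
    exact_mod_cast h
  have hpm : (p : ZMod ℓ) ^ m = 1 := by
    simpa [hsum, sub_eq_zero] using (geom_sum_mul (p : ZMod ℓ) m).symm
  have hp1 : (p : ZMod ℓ) ^ m.gcd (ℓ - 1) = 1 :=
    pow_gcd_eq_one.mpr ⟨hpm, ZMod.pow_card_sub_one_eq_one hp0⟩
  rw [hm, pow_one] at hp1
  rw [← ZMod.natCast_eq_natCast_iff]
  simpa using hp1

theorem padicValNat_geom_sum [hℓ : Fact ℓ.Prime] (hℓ_odd : Odd ℓ) (hp : 1 < p)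
    (h : p ≡ 1 [MOD ℓ]) (hm : m ≠ 0) :
    padicValNat ℓ (∑ i ∈ range m, p ^ i) = padicValNat ℓ m := by
  have hdvd : ℓ ∣ p - 1 := (modEq_iff_dvd' hp.le).mp h.symm
  have hndvd : ¬ ℓ ∣ p := fun hd => hℓ.out.ne_one <|
    Nat.dvd_one.mp (Nat.sub_sub_self hp.le ▸ Nat.dvd_sub hd hdvd)
  have hgeom : (∑ i ∈ range m, p ^ i) * (p - 1) = p ^ m - 1 := by
    have := geom_sum_mul_add (p - 1) m
    rw [Nat.sub_add_cancel hp.le] at this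
    omega
  have hlte := padicValNat.pow_sub_pow hℓ_odd hp hdvd hndvd hm
  rw [one_pow, ← hgeom, padicValNat.mul (geom_sum_pos p.zero_le hm).ne' (by omega)] at hlte
  omega

/-- Modulo a prime factor `q ≠ ℓ` of `(x^ℓ - 1)/(x - 1)`, where `x = p^(ℓ^s)`, the residue `p`
has order exactly `ℓ^(s+1)`; such a factor exists because that quotient exceeds `ℓ` but has
`ℓ`-adic valuation `1`. -/
theorem exists_prime_orderOf_eq_pow [hℓ : Fact ℓ.Prime] (hℓ_odd : Odd ℓ) (hp : 1 < p)
    (h : p ≡ 1 [MOD ℓ]) (s : ℕ) : ∃ q, q.Prime ∧ orderOf (p : ZMod q) = ℓ ^ (s + 1) := by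
  set x := p ^ ℓ ^ s with hx_def
  have hx : 1 < x := Nat.one_lt_pow (pow_ne_zero _ hℓ.out.ne_zero) hp
  have hxℓ : x ≡ 1 [MOD ℓ] := by simpa using h.pow (ℓ ^ s)
  set N := ∑ i ∈ range ℓ, x ^ i
  have hvN : padicValNat ℓ N = 1 := by
    rw [padicValNat_geom_sum hℓ_odd hx hxℓ hℓ.out.ne_zero, padicValNat_self]
  have hNℓ : ℓ < N := lt_geom_sum hx hℓ.out.one_lt
  obtain ⟨q, hq, hqN, hqℓ⟩ : ∃ q, q.Prime ∧ q ∣ N ∧ q ≠ ℓ := by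
    by_contra! hall
    have hNpow := Nat.eq_prime_pow_of_unique_prime_dvd (by omega) (fun hd hdN => hall _ hd hdN)
    rw [hNpow, padicValNat.prime_pow] at hvN
    rw [hNpow, hvN, pow_one] at hNℓ
    exact lt_irrefl _ hNℓ
  have := Fact.mk hq
  have hN0 : ∑ i ∈ range ℓ, (x : ZMod q) ^ i = 0 := by
    rw [← ZMod.natCast_eq_zero_iff] at hqN
    exact_mod_cast hqN
  refine ⟨q, hq, orderOf_eq_prime_pow ?_ ?_⟩
  · intro hx1
    rw [← Nat.cast_pow, ← hx_def] at hx1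
    simp only [hx1, one_pow, sum_const, card_range, nsmul_eq_mul, mul_one] at hN0
    rw [ZMod.natCast_eq_zero_iff, Nat.prime_dvd_prime_iff_eq hq hℓ.out] at hN0
    exact hqℓ hN0
  · have hxℓ1 := geom_sum_mul (x : ZMod q) ℓ
    rw [hN0, zero_mul, eq_comm, sub_eq_zero] at hxℓ1
    rwa [pow_succ, pow_mul, ← Nat.cast_pow]

theorem padicValNat_geom_sum_le_card [hℓ : Fact ℓ.Prime] (hℓ_odd : Odd ℓ) (hp : 1 < p)
    (h : p ≡ 1 [MOD ℓ]) (m : ℕ) :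
    padicValNat ℓ (∑ i ∈ range m, p ^ i) ≤
      #{q ∈ (∑ i ∈ range m, p ^ i).primeFactors | q ≡ 1 [MOD ℓ]} := by
  rcases eq_or_ne m 0 with rfl | hm
  · simp
  rw [padicValNat_geom_sum hℓ_odd hp h hm]
  choose q hq_prime hq_ord using exists_prime_orderOf_eq_pow hℓ_odd hp h
  have hq_inj : Function.Injective q := fun s t hst =>
    Nat.succ_injective (Nat.pow_right_injective hℓ.out.two_le
      ((hq_ord s).symm.trans (hst ▸ hq_ord t)))
  calc padicValNat ℓ m = #(range (padicValNat ℓ m)) := (card_range _).symm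
    _ ≤ _ := by
      refine card_le_card_of_injOn q (fun s hs => ?_) hq_inj.injOn
      have := Fact.mk (hq_prime s)
      have hℓs : ℓ ^ (s + 1) ∣ m := (pow_dvd_pow ℓ (mem_range.mp hs)).trans pow_padicValNat_dvd
      have hℓs_ne_one : ℓ ^ (s + 1) ≠ 1 := (Nat.one_lt_pow s.succ_ne_zero hℓ.out.one_lt).ne'
      simp only [coe_filter, Set.mem_ofPred_eq, mem_primeFactors]
      exact ⟨⟨hq_prime s, dvd_geom_sum_of_orderOf_dvd (hq_ord s ▸ hℓs_ne_one) (hq_ord s ▸ hℓs),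
        (geom_sum_pos p.zero_le hm).ne'⟩,
        (modEq_one_of_orderOf_eq (hq_ord s) (pow_ne_zero _ hℓ.out.ne_zero)).of_dvd
          (dvd_pow_self ℓ s.succ_ne_zero)⟩

end Nat

namespace ArithmeticFunction

theorem padicValNat_sigma_one {ℓ n : ℕ} [hℓ : Fact ℓ.Prime] (hn : n ≠ 0) :
    padicValNat ℓ (σ 1 n) =
      ∑ p ∈ n.primeFactors, padicValNat ℓ (σ 1 (p ^ n.factorization p)) := by
  rw [isMultiplicative_sigma.multiplicative_factorization _ hn, Finsupp.prod,
    Nat.support_factorization, ← Nat.factorization_def _ hℓ.out,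
    Nat.factorization_prod fun p hp =>
      (sigma_pos 1 _ (pow_ne_zero _ (Nat.prime_of_mem_primeFactors hp).ne_zero)).ne',
    Finsupp.finsetSum_apply]
  exact sum_congr rfl fun p _ => Nat.factorization_def _ hℓ.out

theorem sigma_one_primePow_dvd {n p : ℕ} (hn : n ≠ 0) (hp : p ∈ n.primeFactors) :
    σ 1 (p ^ n.factorization p) ∣ σ 1 n := by
  rw [isMultiplicative_sigma.multiplicative_factorization _ hn, Finsupp.prod,
    Nat.support_factorization]
  exact dvd_prod_of_mem _ hp

theorem mul_sigma_one_lt_sigma_one_mul {m c : ℕ} (hm : m ≠ 0) (hc : 1 < c) :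
    c * σ 1 m < σ 1 (m * c) := by
  have hsub : insert 1 (m.divisors.image (· * c)) ⊆ (m * c).divisors := by
    intro d hd
    simp only [mem_insert, mem_image, Nat.mem_divisors] at hd ⊢
    rcases hd with rfl | ⟨d, ⟨hdm, -⟩, rfl⟩
    · exact ⟨one_dvd _, by positivity⟩
    · exact ⟨mul_dvd_mul_right hdm c, by positivity⟩
  have h1 : 1 ∉ m.divisors.image (· * c) := by
    simp only [mem_image, not_exists, not_and]
    intro d _ hd
    have := Nat.eq_one_of_mul_eq_one_left hd
    omega
  calc c * σ 1 m < ∑ d ∈ insert 1 (m.divisors.image (· * c)), d := by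
        rw [sum_insert h1, sum_image fun _ _ _ _ h => Nat.eq_of_mul_eq_mul_right (by omega) h,
          sigma_one_apply, mul_sum]
        simp only [mul_comm c]
        omega
    _ ≤ σ 1 (m * c) := by
        rw [sigma_one_apply]
        exact sum_le_sum_of_subset hsub

end ArithmeticFunction

theorem abundancy_lt_of_dvd {m n : ℕ} (hn : n ≠ 0) (hmn : m ∣ n) (hne : m ≠ n) :
    abundancy m < abundancy n := by
  obtain ⟨c, rfl⟩ := hmn
  have hm : m ≠ 0 := left_ne_zero_of_mul hn
  have hc : 1 < c := by
    rcases c with _ | _ | c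
    · simp at hn
    · simp at hne
    · omega
  unfold abundancy
  rw [div_lt_div_iff₀ (by positivity) (by positivity)]
  push_cast
  calc (σ 1 m : ℚ) * (m * c) = (c * σ 1 m : ℕ) * m := by push_cast; ring
    _ < σ 1 (m * c) * m := by gcongr; exact mul_sigma_one_lt_sigma_one_mul hm hc

theorem five_mul_sigma_one_eq_of_isFriend_ten {n : ℕ} (hn : IsFriend n 10) :
    5 * σ 1 n = 9 * n := by
  obtain ⟨hn0, -, -, hab⟩ := hn
  have h10 : σ 1 10 = 18 := by rw [sigma_one_apply]; decide
  unfold abundancy at hab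
  rw [h10, div_eq_div_iff (by positivity) (by norm_num)] at hab
  have : σ 1 n * 10 = 18 * n := by exact_mod_cast hab
  omega

theorem odd_of_isFriend_ten {n : ℕ} (hn : IsFriend n 10) : Odd n := by
  have h := five_mul_sigma_one_eq_of_isFriend_ten hn
  obtain ⟨hn0, -, hne, hab⟩ := hn
  rw [Nat.odd_iff, ← Nat.two_dvd_ne_zero]
  intro h2
  have h5 : 5 ∣ n := Nat.Coprime.dvd_of_dvd_mul_left (by norm_num) ⟨_, h.symm⟩
  have h10 : 10 ∣ n := Nat.Coprime.mul_dvd_of_dvd_of_dvd (by norm_num) h2 h5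
  exact (abundancy_lt_of_dvd hn0.ne' h10 hne.symm).ne hab.symm

section FiveMulSigmaOneEq

variable {n : ℕ} (h : 5 * σ 1 n = 9 * n) (hodd : Odd n)
include h hodd

theorem mem_primeFactors_erase_five_of_dvd_sigma_one {q : ℕ} (hq : q.Prime) (hqσ : q ∣ σ 1 n)
    (hq1 : q ≡ 1 [MOD 5]) : q ∈ n.primeFactors.erase 5 := by
  have hq9n : q ∣ 9 * n := h ▸ hqσ.mul_left 5
  have hq9 : ¬ q ∣ 9 := fun h9 => by
    obtain rfl := (Nat.prime_dvd_prime_iff_eq hq Nat.prime_three).mp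
      (hq.dvd_of_dvd_pow (show q ∣ 3 ^ 2 from h9))
    exact absurd hq1 (by decide)
  refine mem_erase.mpr ⟨?_, Nat.mem_primeFactors.mpr ⟨hq, ?_, hodd.pos.ne'⟩⟩
  · rintro rfl
    exact absurd hq1 (by decide)
  · exact ((Nat.Prime.dvd_mul hq).mp hq9n).resolve_left hq9

theorem padicValNat_five_sigma_one_primePow_le {p : ℕ} (hp : p ∈ n.primeFactors) (hp5 : p ≠ 5) :
    padicValNat 5 (σ 1 (p ^ n.factorization p)) ≤ #(n.primeFactors.erase 5) := by
  have hpp : p.Prime := Nat.prime_of_mem_primeFactors hp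
  have hσ : Odd (σ 1 n) := Nat.Odd.of_mul_right (h ▸ (by decide : Odd 9).mul hodd)
  have hdvd := sigma_one_primePow_dvd hodd.pos.ne' hp
  rw [sigma_one_apply_prime_pow hpp] at hdvd ⊢
  set a := n.factorization p
  by_cases h5 : 5 ∣ ∑ i ∈ range (a + 1), p ^ i
  swap
  · simp [padicValNat.eq_zero_of_not_dvd h5]
  have ha : Odd (a + 1) := by
    have hp2 : p ≡ 1 [MOD 2] := Nat.odd_iff.mp (hodd.of_dvd_nat (Nat.dvd_of_mem_primeFactors hp))
    have hG : ∑ i ∈ range (a + 1), p ^ i ≡ 1 [MOD 2] := Nat.odd_iff.mp (hσ.of_dvd_nat hdvd)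
    exact Nat.odd_iff.mpr ((Nat.geom_sum_modEq_of_modEq_one hp2 (a + 1)).symm.trans hG)
  have hp1 : p ≡ 1 [MOD 5] := by
    refine Nat.modEq_one_of_dvd_geom_sum (fun h => hp5 ?_) ?_ h5
    · exact ((Nat.prime_dvd_prime_iff_eq Nat.prime_five hpp).mp h).symm
    · exact Nat.Coprime.pow_right 2 (Nat.coprime_two_right.mpr ha)
  calc _ ≤ #{q ∈ (∑ i ∈ range (a + 1), p ^ i).primeFactors | q ≡ 1 [MOD 5]} :=
        Nat.padicValNat_geom_sum_le_card (by decide) hpp.one_lt hp1 _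
    _ ≤ #(n.primeFactors.erase 5) := by
        refine card_le_card fun q hq => ?_
        simp only [mem_filter, Nat.mem_primeFactors] at hq
        obtain ⟨⟨hq, hqG, -⟩, hq1⟩ := hq
        exact mem_primeFactors_erase_five_of_dvd_sigma_one h hodd hq (hqG.trans hdvd) hq1

end FiveMulSigmaOneEq

theorem max_exponent_of_five (n : ℕ) (hn : IsFriend n 10) (k : ℕ)
    (hk : k = n.primeFactors.card) :
    padicValNat 5 n ≤ (k - 1) ^ 2 + 1 := by
  have h := five_mul_sigma_one_eq_of_isFriend_ten hn
  have hodd := odd_of_isFriend_ten hn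
  have hn0 : n ≠ 0 := hodd.pos.ne'
  have h5 : 5 ∈ n.primeFactors := Nat.mem_primeFactors.mpr
    ⟨Nat.prime_five, Nat.Coprime.dvd_of_dvd_mul_left (by norm_num) ⟨_, h.symm⟩, hn0⟩
  have hv : padicValNat 5 n = padicValNat 5 (σ 1 n) + 1 := by
    have := congrArg (padicValNat 5) h
    rw [padicValNat.mul (by norm_num) (sigma_pos 1 n hn0).ne', padicValNat.mul (by norm_num) hn0,
      padicValNat_self, padicValNat.eq_zero_of_not_dvd (by norm_num : ¬ 5 ∣ 9)] at this
    omega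
  have hσ5 : padicValNat 5 (σ 1 (5 ^ n.factorization 5)) = 0 := by
    rw [sigma_one_apply_prime_pow Nat.prime_five]
    exact padicValNat.eq_zero_of_not_dvd (Nat.not_dvd_geom_sum_self (by norm_num) (by omega))
  have hsum := sum_le_card_nsmul _ _ _ fun p hp =>
    padicValNat_five_sigma_one_primePow_le h hodd (mem_of_mem_erase hp) (ne_of_mem_erase hp)
  rw [card_erase_of_mem h5, ← hk, smul_eq_mul] at hsum
  rw [hv, padicValNat_sigma_one hn0, ← sum_erase_add _ _ h5, hσ5, sq]
  omega
end

section
/- Let p be a prime with p ≥ 7 and let n be a friend of 2p. Then n is odd, p divides n, and n has at least two distinct prime factors, i.e. ω(n) ≥ 2. If additionally p ≡ 1 (mod 4), then n is a perfect square. -/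
/-! Clearing denominators in the friendship condition gives `2p·σ(n) = 3(p+1)·n`, and since
`p ∤ 3(p+1)` this forces `p ∣ n`. If `n` were even, `2p` would be a proper divisor of `n`; but the
abundancy index `σ(n)/n = ∑_{d ∣ n} 1/d` strictly increases along proper divisibility. A prime
power `p^k` has abundancy below `p/(p-1) ≤ 3(p+1)/(2p)`, so `n` is not a power of `p`. When
`p ≡ 1 (mod 4)`, `p + 1` is exactly divisible by `2`, so `σ(n)` is odd; as `n` is odd, each factor
`σ(q^e) = 1 + q + ⋯ + q^e` of `σ(n)` is then odd, i.e. every exponent `e` is even. -/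

open ArithmeticFunction

open scoped ArithmeticFunction.sigma

theorem abundancy_eq_abundancy_iff {m n : ℕ} (hm : m ≠ 0) (hn : n ≠ 0) :
    abundancy m = abundancy n ↔ σ 1 m * n = σ 1 n * m := by
  rw [abundancy, abundancy, div_eq_div_iff (by exact_mod_cast hm) (by exact_mod_cast hn)]
  exact_mod_cast Iff.rfl

theorem abundancy_eq_sum_inv {n : ℕ} (hn : n ≠ 0) :
    abundancy n = ∑ d ∈ n.divisors, (d : ℚ)⁻¹ := by
  rw [← Nat.sum_div_divisors, abundancy, sigma_one_apply, Nat.cast_sum, Finset.sum_div]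
  refine Finset.sum_congr rfl fun d hd => ?_
  have hd0 : (d : ℚ) ≠ 0 := by exact_mod_cast (Nat.pos_of_mem_divisors hd).ne'
  rw [Nat.cast_div (Nat.dvd_of_mem_divisors hd) hd0]
  field_simp

theorem abundancy_lt_abundancy_of_dvd {d n : ℕ} (hn : n ≠ 0) (hdn : d ∣ n) (hne : d ≠ n) :
    abundancy d < abundancy n := by
  have hd : d ≠ 0 := ne_zero_of_dvd_ne_zero hn hdn
  rw [abundancy_eq_sum_inv hd, abundancy_eq_sum_inv hn]
  refine Finset.sum_lt_sum_of_subset (Nat.divisors_subset_of_dvd hn hdn)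
    (Nat.mem_divisors_self n hn) ?_ (by positivity) fun _ _ _ => by positivity
  simpa [hd] using fun hnd => hne (Nat.dvd_antisymm hdn hnd)

theorem Nat.sigma_one_two_mul_prime {p : ℕ} (hp : p.Prime) (hp2 : p ≠ 2) :
    σ 1 (2 * p) = 3 * (p + 1) := by
  have hσp : σ 1 p = p + 1 := by
    simpa [Finset.sum_range_succ, add_comm] using sigma_one_apply_prime_pow (i := 1) hp
  rw [isMultiplicative_sigma.map_mul_of_coprime ((Nat.coprime_primes prime_two hp).mpr hp2.symm),
    hσp]
  rfl

theorem abundancy_two_mul_prime {p : ℕ} (hp : p.Prime) (hp2 : p ≠ 2) :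
    abundancy (2 * p) = 3 * (p + 1) / (2 * p) := by
  rw [abundancy, Nat.sigma_one_two_mul_prime hp hp2]
  push_cast
  rfl

theorem abundancy_prime_pow_lt {p : ℕ} (hp : p.Prime) (k : ℕ) :
    abundancy (p ^ k) < p / (p - 1) := by
  have hp1 : (1 : ℚ) < p := by exact_mod_cast hp.one_lt
  rw [abundancy, sigma_one_apply_prime_pow hp]
  push_cast
  rw [geom_sum_eq hp1.ne', pow_succ, div_div, div_lt_div_iff₀ (by positivity) (by linarith)]
  nlinarith [pow_pos (by linarith : (0 : ℚ) < p) k]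

theorem abundancy_prime_pow_lt_abundancy_two_mul_prime {p : ℕ} (hp : p.Prime) (hp2 : p ≠ 2)
    (k : ℕ) : abundancy (p ^ k) < abundancy (2 * p) := by
  have hp1 : (2 : ℚ) ≤ p := by exact_mod_cast hp.two_le
  refine (abundancy_prime_pow_lt hp k).trans_le ?_
  rw [abundancy_two_mul_prime hp hp2, div_le_div_iff₀ (by linarith) (by linarith)]
  nlinarith

theorem Nat.eq_prime_pow_of_card_primeFactors_le_one {n p : ℕ} (hn : n ≠ 0) (hp : p.Prime)
    (hpn : p ∣ n) (h : n.primeFactors.card ≤ 1) : n = p ^ n.primeFactorsList.length :=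
  eq_prime_pow_of_unique_prime_dvd hn fun hq hqn =>
    Finset.card_le_one.mp h _ (mem_primeFactors.mpr ⟨hq, hqn, hn⟩) _
      (mem_primeFactors.mpr ⟨hp, hpn, hn⟩)

theorem Nat.isSquare_of_forall_even_factorization {n : ℕ} (hn : n ≠ 0)
    (h : ∀ q, Even (n.factorization q)) : IsSquare n := by
  refine ⟨n.factorization.prod fun q e => q ^ (e / 2), ?_⟩
  conv_lhs => rw [← Nat.prod_factorization_pow_eq_self hn]
  rw [Finsupp.prod, Finsupp.prod, ← Finset.prod_mul_distrib]
  refine Finset.prod_congr rfl fun q _ => ?_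
  rw [← pow_add, ← two_mul, Nat.two_mul_div_two_of_even (h q)]

theorem Odd.odd_geom_sum_succ_iff {q : ℕ} (hq : Odd q) (e : ℕ) :
    Odd (∑ k ∈ Finset.range (e + 1), q ^ k) ↔ Even e := by
  rw [Finset.odd_sum_iff_odd_card_odd, Finset.filter_true_of_mem fun k _ => hq.pow,
    Finset.card_range, Nat.odd_add_one, Nat.not_odd_iff_even]

theorem Nat.isSquare_of_odd_of_odd_sigma_one {n : ℕ} (hn : Odd n) (hσ : Odd (σ 1 n)) :
    IsSquare n := by
  have hn0 : n ≠ 0 := hn.pos.ne'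
  refine isSquare_of_forall_even_factorization hn0 fun q => ?_
  by_cases hq : q ∈ n.primeFactors
  · rw [sigma_one_apply, Nat.sum_divisors hn0] at hσ
    have hqodd : Odd q := hn.of_dvd_nat (dvd_of_mem_primeFactors hq)
    exact (hqodd.odd_geom_sum_succ_iff _).mp (hσ.of_dvd_nat (Finset.dvd_prod_of_mem _ hq))
  · rw [← support_factorization, Finsupp.notMem_support_iff] at hq
    simp [hq]

theorem friend_of_two_p (p : ℕ) (hp : p.Prime) (hp7 : 7 ≤ p)
    (n : ℕ) (hn : IsFriend n (2 * p)) :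
    Odd n ∧ p ∣ n ∧ 2 ≤ n.primeFactors.card ∧ (p % 4 = 1 → IsSquare n) := by
  obtain ⟨hn0, -, hne, habu⟩ := hn
  have hp2 : p ≠ 2 := by omega
  have hcross : σ 1 n * (2 * p) = 3 * (p + 1) * n := by
    rwa [abundancy_eq_abundancy_iff hn0.ne' (by omega), Nat.sigma_one_two_mul_prime hp hp2] at habu
  have hpn : p ∣ n := by
    have hcop : Nat.Coprime p (3 * (p + 1)) := Nat.Coprime.mul_right
      ((Nat.coprime_primes hp Nat.prime_three).mpr (by omega))
      (Nat.coprime_self_add_right.mpr (Nat.coprime_one_right p))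
    exact hcop.dvd_of_dvd_mul_left (hcross ▸ (dvd_mul_left p 2).mul_left _)
  have hodd : Odd n := by
    by_contra heven
    have h2pn : 2 * p ∣ n := Nat.Coprime.mul_dvd_of_dvd_of_dvd
      ((Nat.coprime_primes Nat.prime_two hp).mpr hp2.symm)
      (Nat.not_odd_iff_even.mp heven).two_dvd hpn
    exact (abundancy_lt_abundancy_of_dvd hn0.ne' h2pn (Ne.symm hne)).ne' habu
  refine ⟨hodd, hpn, ?_, fun hp4 => Nat.isSquare_of_odd_of_odd_sigma_one hodd ?_⟩
  · by_contra! hcard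
    have hpow := Nat.eq_prime_pow_of_card_primeFactors_le_one hn0.ne' hp hpn (by omega)
    exact (abundancy_prime_pow_lt_abundancy_two_mul_prime hp hp2 _).ne (hpow ▸ habu)
  · obtain ⟨t, ht⟩ : ∃ t, p + 1 = 2 * (2 * t + 1) := ⟨p / 4, by omega⟩
    have hσp : σ 1 n * p = 3 * (2 * t + 1) * n := by rw [ht] at hcross; linarith
    have hσp_odd : Odd (σ 1 n * p) :=
      hσp ▸ ((by decide : Odd 3).mul (odd_two_mul_add_one t)).mul hodd
    exact (Nat.odd_mul.mp hσp_odd).1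
end
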